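/- arXiv:2008.04949 — 7 statements merged into one kernel-verified Lean document; each statement's English description precedes it below -/
import Mathlib

section
/- Let n ≥ 1 and for each i ∈ {1,…,n} let θ_i : ℝ → ℝ be a non-decreasing completion-time function with θ_i(t) ≥ t, let ρ_i : ℝ → ℝ be a non-decreasing consumption function, and let [e_i, l_i] be the start-time window of activity i. Define the greedy schedule by t_1 = e_1 and t_i = max(θ_{i-1}(t_{i-1}), e_i) for 1 < i ≤ n. If this greedy schedule satisfies t_i ≤ l_i for all i and Σ_{i=1}^n ρ_i(t_i) ≤ Q, then it minimizes θ_n(t_n) among all feasible schedules, i.e., all (s_1,…,s_n) with s_i ∈ [e_i, l_i], θ_i(s_i) ≤ s_{i+1} for i < n, and Σ_i ρ_i(s_i) ≤ Q. -/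
/-- Greedy (as-early-as-possible) scheduling is optimal for the TDASP when all
completion-time functions satisfy FIFO and all consumption functions are
non-decreasing. -/
theorem stmt_0 (n : ℕ) (hn : 1 ≤ n) (θ ρ : ℕ → ℝ → ℝ) (e l : ℕ → ℝ) (Q : ℝ)
    (hθmono : ∀ i, Monotone (θ i)) (hθge : ∀ i t, t ≤ θ i t)
    (hρmono : ∀ i, Monotone (ρ i))
    (t : ℕ → ℝ)
    (ht0 : t 0 = e 0)
    (htrec : ∀ i, i + 1 < n → t (i + 1) = max (θ i (t i)) (e (i + 1)))
    (htwin : ∀ i, i < n → t i ≤ l i)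
    (htQ : ∑ i ∈ Finset.range n, ρ i (t i) ≤ Q)
    (s : ℕ → ℝ)
    (hswin : ∀ i, i < n → e i ≤ s i ∧ s i ≤ l i)
    (hsprec : ∀ i, i + 1 < n → θ i (s i) ≤ s (i + 1))
    (hsQ : ∑ i ∈ Finset.range n, ρ i (s i) ≤ Q) :
    θ (n - 1) (t (n - 1)) ≤ θ (n - 1) (s (n - 1)) := by
  have key : ∀ i, i < n → t i ≤ s i := by
    intro i
    induction i with
    | zero => intro h; rw [ht0]; exact (hswin 0 h).1
    | succ k ih =>
      intro h
      have hk : k < n := Nat.lt_of_succ_lt h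
      rw [htrec k h]
      exact max_le (le_trans (hθmono k (ih hk)) (hsprec k h)) (hswin (k+1) h).1
  exact hθmono (n-1) (key (n-1) (Nat.sub_lt hn one_pos))
end

section
/- Under the assumptions of the greedy lemma (all θ_i non-decreasing with θ_i(t) ≥ t, all ρ_i non-decreasing), if the greedy schedule t_1 = e_1, t_i = max(θ_{i-1}(t_{i-1}), e_i) violates some time window, i.e., t_j > l_j for some j, then no feasible schedule exists: there is no (s_1,…,s_n) with s_i ∈ [e_i, l_i] for all i and θ_i(s_i) ≤ s_{i+1} for all i < n. -/
/-- If the greedy schedule violates some time window, then no feasible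
schedule exists for the TDASP. -/
theorem stmt_1 (n : ℕ) (hn : 1 ≤ n) (θ ρ : ℕ → ℝ → ℝ) (e l : ℕ → ℝ)
    (hθmono : ∀ i, Monotone (θ i)) (hθge : ∀ i t, t ≤ θ i t)
    (hρmono : ∀ i, Monotone (ρ i))
    (t : ℕ → ℝ)
    (ht0 : t 0 = e 0)
    (htrec : ∀ i, i + 1 < n → t (i + 1) = max (θ i (t i)) (e (i + 1)))
    (hviol : ∃ j, j < n ∧ l j < t j) :
    ¬ ∃ s : ℕ → ℝ,
        (∀ i, i < n → e i ≤ s i ∧ s i ≤ l i) ∧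
        (∀ i, i + 1 < n → θ i (s i) ≤ s (i + 1)) := by
  rintro ⟨s, hwin, hprec⟩
  obtain ⟨j, hj, hlj⟩ := hviol
  have key : ∀ i, i < n → t i ≤ s i := by
    intro i
    induction i with
    | zero => intro h; rw [ht0]; exact (hwin 0 h).1
    | succ k ih =>
      intro h
      have hk : k < n := Nat.lt_of_succ_lt h
      rw [htrec k h]
      exact max_le (le_trans (hθmono k (ih hk)) (hprec k h)) (hwin _ h).1
  exact absurd ((key j hj).trans (hwin j hj).2) (not_le.mpr hlj)
end

section
/- Let V be the vertex set of a partially time-expanded network for the TDASP satisfying: (P1) (i, e_i) ∈ V and (i, l_i) ∈ V for every activity i; (P2) for every (i,t) ∈ V with i < n, if s = ε⌈θ_i(t)/ε⌉ satisfies e_{i+1} < s < l_{i+1} then (i+1, s) ∈ V; (P3) every vertex (i,t) ∈ V with t < l_i carries the consumption value q_{(i,t)} = min over t̄ ∈ {t, t+ε, …, t'−ε} of ρ_i(t̄), where t' is the smallest time with t' > t and (i,t') ∈ V, and q_{(i,l_i)} = ρ_i(l_i). Then for any feasible solution (t_1,…,t_n) of the fully discretized TDASP (all t_i multiples of ε,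 t_i ∈ [e_i,l_i], θ_i(t_i) ≤ t_{i+1}, Σ ρ_i(t_i) ≤ Q), the path (t'_1,…,t'_n) obtained by setting t'_i to the largest time with (i,t'_i) ∈ V and t'_i ≤ t_i is well-defined, feasible in the restricted problem (t'_i ∈ windows, θ_i(t'_i) ≤ t'_{i+1}, Σ q_{(i,t'_i)} ≤ Q), and satisfies θ_n(t'_n) ≤ θ_n(t_n). Hence the optimal value of the TDASP restricted to V is a lower bound on the optimal value of the fully discretized TDASP. -/
private lemma grid_mono {ε a : ℝ} (hε : 0 < ε) {j k : ℕ} (h : j ≤ k) :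
    a + (j : ℝ) * ε ≤ a + (k : ℝ) * ε := by
  have hjk : (j : ℝ) ≤ (k : ℝ) := by exact_mod_cast h
  nlinarith

private lemma grid_mono' {ε a : ℝ} (hε : 0 < ε) {j k : ℕ}
    (h : a + (j : ℝ) * ε ≤ a + (k : ℝ) * ε) : j ≤ k := by
  have hjk : (j : ℝ) ≤ (k : ℝ) := by nlinarith
  exact_mod_cast hjk



/-- Lower-bound lemma: rounding down a feasible fully-discretized TDASP
solution to the vertices of a partially expanded network satisfying
Properties P1–P3 yields a feasible restricted solution with no larger
completion time. -/
theorem stmt_3 (n : ℕ) (hn : 1 ≤ n) (ε : ℝ) (hε : 0 < ε)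
    (θ ρ : ℕ → ℝ → ℝ) (e l : ℕ → ℝ) (Q : ℝ)
    (q : ℕ → ℝ → ℝ)
    (V : Set (ℕ × ℝ))
    (hθmono : ∀ i, Monotone (θ i))
    (hel : ∀ i, i < n → e i ≤ l i)
    (hgridwin : ∀ i, i < n → ∃ k : ℕ, l i = e i + (k : ℝ) * ε)
    (hwincomp : ∀ i, i + 1 < n → θ i (e i) ≤ e (i + 1) ∧ θ i (l i) ≤ l (i + 1))
    (hV : ∀ v ∈ V, v.1 < n ∧ e v.1 ≤ v.2 ∧ v.2 ≤ l v.1 ∧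
      ∃ k : ℕ, v.2 = e v.1 + (k : ℝ) * ε)
    -- Property 1: window endpoints are vertices
    (hP1 : ∀ i, i < n → (i, e i) ∈ V ∧ (i, l i) ∈ V)
    -- Property 2: rounded-up immediate successors are vertices
    (hP2 : ∀ i t, (i, t) ∈ V → i + 1 < n →
      e (i + 1) < ε * ⌈θ i t / ε⌉ → ε * ⌈θ i t / ε⌉ < l (i + 1) →
      (i + 1, (ε * ⌈θ i t / ε⌉ : ℝ)) ∈ V)
    -- Property 3: vertex consumptions are interval minima of ρ over the grid
    (hP3 : ∀ i t, (i, t) ∈ V → t < l i → ∀ t', (i, t') ∈ V → t < t' →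
      (∀ u, (i, u) ∈ V → t < u → t' ≤ u) →
      IsLeast {x : ℝ | ∃ k : ℕ, t + (k : ℝ) * ε < t' ∧ x = ρ i (t + (k : ℝ) * ε)} (q i t))
    (hP3l : ∀ i, i < n → q i (l i) = ρ i (l i))
    -- a feasible solution of the fully discretized TDASP
    (t : ℕ → ℝ)
    (htgrid : ∀ i, i < n → ∃ k : ℕ, t i = e i + (k : ℝ) * ε)
    (htwin : ∀ i, i < n → e i ≤ t i ∧ t i ≤ l i)
    (htprec : ∀ i, i + 1 < n → θ i (t i) ≤ t (i + 1))
    (htQ : ∑ i ∈ Finset.range n, ρ i (t i) ≤ Q) :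
    ∃ t' : ℕ → ℝ,
      (∀ i, i < n → (i, t' i) ∈ V ∧ t' i ≤ t i ∧
        ∀ u, (i, u) ∈ V → u ≤ t i → u ≤ t' i) ∧
      (∀ i, i < n → e i ≤ t' i ∧ t' i ≤ l i) ∧
      (∀ i, i + 1 < n → θ i (t' i) ≤ t' (i + 1)) ∧
      (∑ i ∈ Finset.range n, q i (t' i) ≤ Q) ∧
      θ (n - 1) (t' (n - 1)) ≤ θ (n - 1) (t (n - 1)) := by

  classical
  -- grid indices for t
  have hM : ∀ i, ∃ k : ℕ, i < n → t i = e i + (k : ℝ) * ε := by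
    intro i
    by_cases hi : i < n
    · obtain ⟨k, hk⟩ := htgrid i hi
      exact ⟨k, fun _ => hk⟩
    · exact ⟨0, fun h => absurd h hi⟩
  choose M hMspec using hM
  set P : ℕ → ℕ → Prop := fun i k => (i, e i + (k : ℝ) * ε) ∈ V ∧ e i + (k : ℝ) * ε ≤ t i
    with hPdef
  set t' : ℕ → ℝ := fun i => e i + (Nat.findGreatest (P i) (M i) : ℝ) * ε with ht'def
  have ht'eq : ∀ i, t' i = e i + (Nat.findGreatest (P i) (M i) : ℝ) * ε := fun i => rfl
  have key : ∀ i, i < n → ((i, t' i) ∈ V ∧ t' i ≤ t i) ∧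
      ∀ u, (i, u) ∈ V → u ≤ t i → u ≤ t' i := by
    intro i hi
    have h0 : P i 0 :=
      ⟨by simpa using (hP1 i hi).1, by simpa using (htwin i hi).1⟩
    have hspec' : P i (Nat.findGreatest (P i) (M i)) :=
      Nat.findGreatest_spec (Nat.zero_le _) h0
    have hspec : (i, e i + ((Nat.findGreatest (P i) (M i) : ℕ) : ℝ) * ε) ∈ V ∧
        e i + ((Nat.findGreatest (P i) (M i) : ℕ) : ℝ) * ε ≤ t i := hspec'
    refine ⟨⟨hspec.1, hspec.2⟩, ?_⟩
    intro u hu hut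
    obtain ⟨j, hj⟩ := (hV _ hu).2.2.2
    have hj' : u = e i + (j : ℝ) * ε := hj
    have hjM : j ≤ M i := by
      refine grid_mono' hε (a := e i) ?_
      rw [← hj', ← hMspec i hi]; exact hut
    have hle : j ≤ Nat.findGreatest (P i) (M i) := by
      exact Nat.le_findGreatest hjM ⟨hj' ▸ hu, hj' ▸ hut⟩
    rw [hj', ht'eq]
    exact grid_mono hε hle
  refine ⟨t', fun i hi => ⟨(key i hi).1.1, (key i hi).1.2, (key i hi).2⟩, ?_, ?_, ?_, ?_⟩
  · -- windows
    intro i hi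
    constructor
    · rw [ht'eq]
      have : (0:ℝ) ≤ (Nat.findGreatest (P i) (M i) : ℝ) * ε := by positivity
      linarith
    · exact le_trans (key i hi).1.2 (htwin i hi).2
  · -- precedence
    intro i hi
    have hi' : i < n := by omega
    have hgt : θ i (t' i) ≤ t (i + 1) :=
      le_trans (hθmono i (key i hi').1.2) (htprec i hi)
    suffices h : ∃ u, (i + 1, u) ∈ V ∧ θ i (t' i) ≤ u ∧ u ≤ t (i + 1) by
      obtain ⟨u, huV, hgu, hut⟩ := h
      exact le_trans hgu ((key (i + 1) hi).2 u huV hut)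
    by_cases hge : θ i (t' i) ≤ e (i + 1)
    · exact ⟨e (i + 1), (hP1 _ hi).1, hge, (htwin _ hi).1⟩
    push_neg at hge
    have hdm : θ i (t' i) / ε * ε = θ i (t' i) := div_mul_cancel₀ _ hε.ne'
    have hgs : θ i (t' i) ≤ ε * (⌈θ i (t' i) / ε⌉ : ℝ) := by
      have h1 : θ i (t' i) / ε ≤ (⌈θ i (t' i) / ε⌉ : ℝ) := Int.le_ceil _
      nlinarith
    have hsg : ε * (⌈θ i (t' i) / ε⌉ : ℝ) < θ i (t' i) + ε := by
      have h1 : ((⌈θ i (t' i) / ε⌉ : ℤ) : ℝ) < θ i (t' i) / ε + 1 := Int.ceil_lt_add_one _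
      nlinarith
    obtain ⟨mt, hmt⟩ := htgrid (i + 1) hi
    obtain ⟨K, hK⟩ := hgridwin (i + 1) hi
    by_cases hsl : ε * (⌈θ i (t' i) / ε⌉ : ℝ) < l (i + 1)
    · have hes : e (i + 1) < ε * (⌈θ i (t' i) / ε⌉ : ℝ) := lt_of_lt_of_le hge hgs
      have hsV : (i + 1, (ε * (⌈θ i (t' i) / ε⌉ : ℝ) : ℝ)) ∈ V :=
        hP2 i (t' i) (key i hi').1.1 hi hes hsl
      obtain ⟨k, hk⟩ := (hV _ hsV).2.2.2
      have hk' : ε * (⌈θ i (t' i) / ε⌉ : ℝ) = e (i + 1) + (k : ℝ) * ε := hk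
      have hd : t (i + 1) = ε * ((⌈θ i (t' i) / ε⌉ + (mt : ℤ) - (k : ℤ) : ℤ) : ℝ) := by
        push_cast
        linarith [hmt, hk']
      have hcd : ⌈θ i (t' i) / ε⌉ ≤ ⌈θ i (t' i) / ε⌉ + (mt : ℤ) - (k : ℤ) := by
        refine Int.ceil_le.mpr ?_
        rw [div_le_iff₀ hε]
        rw [hd] at hgt
        linarith
      have hst : ε * (⌈θ i (t' i) / ε⌉ : ℝ) ≤ t (i + 1) := by
        rw [hd]
        have hc : ((⌈θ i (t' i) / ε⌉ : ℤ) : ℝ) ≤ ((⌈θ i (t' i) / ε⌉ + (mt : ℤ) - (k : ℤ) : ℤ) : ℝ) := by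
          exact_mod_cast hcd
        nlinarith
      exact ⟨_, hsV, hgs, hst⟩
    · push_neg at hsl
      have hmtK : mt ≤ K := by
        refine grid_mono' hε (a := e (i + 1)) ?_
        rw [← hmt, ← hK]; exact (htwin _ hi).2
      have hmK : mt = K := by
        by_contra hne
        have hmtK' : mt + 1 ≤ K := by omega
        have h1 : t (i + 1) + ε ≤ l (i + 1) := by
          have h2 : ((mt : ℝ) + 1) ≤ (K : ℝ) := by exact_mod_cast hmtK'
          rw [hmt, hK]; nlinarith
        linarith
      have htl : t (i + 1) = l (i + 1) := by rw [hmt, hK, hmK]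
      exact ⟨l (i + 1), (hP1 _ hi).2, htl ▸ hgt, htl.ge⟩
  · -- capacity
    have hqle : ∀ i ∈ Finset.range n, q i (t' i) ≤ ρ i (t i) := by
      intro i hi'
      have hi : i < n := Finset.mem_range.mp hi'
      have hVi := (key i hi).1.1
      have ht'l : t' i ≤ l i := le_trans (key i hi).1.2 (htwin i hi).2
      rcases eq_or_lt_of_le ht'l with heq | hlt
      · have htl : t i = l i := le_antisymm (htwin i hi).2 (heq ▸ (key i hi).1.2)
        rw [heq, htl, hP3l i hi]
      · obtain ⟨K, hK⟩ := hgridwin i hi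
        have hEx : ∃ k : ℕ, (i, e i + (k : ℝ) * ε) ∈ V ∧ t' i < e i + (k : ℝ) * ε :=
          ⟨K, by rw [← hK]; exact ⟨(hP1 i hi).2, hlt⟩⟩
        have hk'spec := Nat.find_spec hEx
        have hleast : ∀ u, (i, u) ∈ V → t' i < u → e i + ((Nat.find hEx : ℕ) : ℝ) * ε ≤ u := by
          intro u hu htu
          obtain ⟨j, hj⟩ := (hV _ hu).2.2.2
          have hj' : u = e i + (j : ℝ) * ε := hj
          have hjf : Nat.find hEx ≤ j := Nat.find_min' hEx ⟨hj' ▸ hu, hj' ▸ htu⟩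
          rw [hj']
          exact grid_mono hε hjf
        have hIsLeast := hP3 i (t' i) hVi hlt _ hk'spec.1 hk'spec.2 hleast
        have hkG : Nat.findGreatest (P i) (M i) ≤ M i := Nat.findGreatest_le _
        have heqt : t' i + ((M i - Nat.findGreatest (P i) (M i) : ℕ) : ℝ) * ε = t i := by
          rw [ht'eq i, Nat.cast_sub hkG]
          linear_combination -(hMspec i hi)
        have htu' : t i < e i + ((Nat.find hEx : ℕ) : ℝ) * ε := by
          by_contra h
          push_neg at h
          exact absurd ((key i hi).2 _ hk'spec.1 h) (not_le.mpr hk'spec.2)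
        have hmem : ρ i (t i) ∈ {x : ℝ | ∃ k : ℕ,
            t' i + (k : ℝ) * ε < e i + ((Nat.find hEx : ℕ) : ℝ) * ε ∧
            x = ρ i (t' i + (k : ℝ) * ε)} := by
          refine ⟨M i - Nat.findGreatest (P i) (M i), ?_, ?_⟩
          · rw [heqt]; exact htu'
          · rw [heqt]
        exact hIsLeast.2 hmem
    exact le_trans (Finset.sum_le_sum hqle) htQ
  · -- final completion time
    exact hθmono (n - 1) (key (n - 1) (by omega)).1.2
end

section
/- Let V be a partially expanded network satisfying Properties P1–P3 (as in the lower-bound lemma). Suppose the path (1,t_1),…,(n,t_n) is an optimal solution of the TDASP restricted to V, and suppose q_{(i,t_i)} = ρ_i(t_i) for every i. Then (t_1,…,t_n) is a feasible solution of the fully discretized TDASP, and it is optimal for the fully discretized TDASP. -/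
lemma grid_le' {ε : ℝ} (hε : 0 < ε) {e : ℝ} {a b : ℕ}
    (h : e + (a : ℝ) * ε ≤ e + (b : ℝ) * ε) : a ≤ b := by
  have h1 : (a : ℝ) * ε ≤ (b : ℝ) * ε := by linarith
  have h2 : (a : ℝ) ≤ b := le_of_mul_le_mul_right h1 hε
  exact_mod_cast h2

lemma grid_lt' {ε : ℝ} (hε : 0 < ε) {e : ℝ} {a b : ℕ}
    (h : e + (a : ℝ) * ε < e + (b : ℝ) * ε) : a < b := by
  have h1 : (a : ℝ) * ε < (b : ℝ) * ε := by linarith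
  have h2 : (a : ℝ) < b := lt_of_mul_lt_mul_right h1 hε.le
  exact_mod_cast h2

lemma exists_max' {ε : ℝ} (hε : 0 < ε) {e li si : ℝ} (W : Set ℝ)
    (hWg : ∀ u ∈ W, ∃ k : ℕ, u = e + (k : ℝ) * ε)
    (hWl : ∀ u ∈ W, u ≤ li)
    (heW : e ∈ W) (hes : e ≤ si)
    (K : ℕ) (hK : li = e + (K : ℝ) * ε) :
    ∃ u ∈ W, u ≤ si ∧ ∀ v ∈ W, v ≤ si → v ≤ u := by
  classical
  set P : ℕ → Prop := fun k => e + (k : ℝ) * ε ∈ W ∧ e + (k : ℝ) * ε ≤ si with hP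
  have hP0 : P 0 := by
    constructor
    · simpa using heW
    · simpa using hes
  have hPk₀ : P (Nat.findGreatest P K) := Nat.findGreatest_spec (Nat.zero_le K) hP0
  refine ⟨e + (Nat.findGreatest P K : ℝ) * ε, hPk₀.1, hPk₀.2, ?_⟩
  intro v hv hvs
  obtain ⟨j, rfl⟩ := hWg v hv
  have hjK : j ≤ K := grid_le' hε (hK ▸ hWl _ hv)
  have hj : j ≤ Nat.findGreatest P K := Nat.le_findGreatest hjK ⟨hv, hvs⟩
  have hj' : (j : ℝ) ≤ (Nat.findGreatest P K : ℝ) := by exact_mod_cast hj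
  nlinarith

/-- If an optimal restricted solution in a partially expanded network
satisfying P1–P3 has exact consumption values (q = ρ at its vertices), then it
is a feasible and optimal solution of the fully discretized TDASP. -/
theorem stmt_4 (n : ℕ) (hn : 1 ≤ n) (ε : ℝ) (hε : 0 < ε)
    (θ ρ : ℕ → ℝ → ℝ) (e l : ℕ → ℝ) (Q : ℝ)
    (q : ℕ → ℝ → ℝ)
    (V : Set (ℕ × ℝ))
    (hθmono : ∀ i, Monotone (θ i))
    (hel : ∀ i, i < n → e i ≤ l i)
    (hgridwin : ∀ i, i < n → ∃ k : ℕ, l i = e i + (k : ℝ) * ε)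
    (hwincomp : ∀ i, i + 1 < n → θ i (e i) ≤ e (i + 1) ∧ θ i (l i) ≤ l (i + 1))
    (hV : ∀ v ∈ V, v.1 < n ∧ e v.1 ≤ v.2 ∧ v.2 ≤ l v.1 ∧
      ∃ k : ℕ, v.2 = e v.1 + (k : ℝ) * ε)
    (hP1 : ∀ i, i < n → (i, e i) ∈ V ∧ (i, l i) ∈ V)
    (hP2 : ∀ i t, (i, t) ∈ V → i + 1 < n →
      e (i + 1) < ε * ⌈θ i t / ε⌉ → ε * ⌈θ i t / ε⌉ < l (i + 1) →
      (i + 1, (ε * ⌈θ i t / ε⌉ : ℝ)) ∈ V)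
    (hP3 : ∀ i t, (i, t) ∈ V → t < l i → ∀ t', (i, t') ∈ V → t < t' →
      (∀ u, (i, u) ∈ V → t < u → t' ≤ u) →
      IsLeast {x : ℝ | ∃ k : ℕ, t + (k : ℝ) * ε < t' ∧ x = ρ i (t + (k : ℝ) * ε)} (q i t))
    (hP3l : ∀ i, i < n → q i (l i) = ρ i (l i))
    -- an optimal solution of the TDASP restricted to V
    (t : ℕ → ℝ)
    (htV : ∀ i, i < n → (i, t i) ∈ V)
    (htprec : ∀ i, i + 1 < n → θ i (t i) ≤ t (i + 1))
    (htq : ∑ i ∈ Finset.range n, q i (t i) ≤ Q)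
    (htopt : ∀ s : ℕ → ℝ, (∀ i, i < n → (i, s i) ∈ V) →
      (∀ i, i + 1 < n → θ i (s i) ≤ s (i + 1)) →
      (∑ i ∈ Finset.range n, q i (s i) ≤ Q) →
      θ (n - 1) (t (n - 1)) ≤ θ (n - 1) (s (n - 1)))
    -- exact consumption values along the solution
    (hexact : ∀ i, i < n → q i (t i) = ρ i (t i)) :
    -- feasibility for the fully discretized TDASP
    (∑ i ∈ Finset.range n, ρ i (t i) ≤ Q) ∧
    -- optimality for the fully discretized TDASP
    (∀ s : ℕ → ℝ,
      (∀ i, i < n → ∃ k : ℕ, s i = e i + (k : ℝ) * ε) →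
      (∀ i, i < n → e i ≤ s i ∧ s i ≤ l i) →
      (∀ i, i + 1 < n → θ i (s i) ≤ s (i + 1)) →
      (∑ i ∈ Finset.range n, ρ i (s i) ≤ Q) →
      θ (n - 1) (t (n - 1)) ≤ θ (n - 1) (s (n - 1))) := by
  classical
  constructor
  · calc ∑ i ∈ Finset.range n, ρ i (t i)
        = ∑ i ∈ Finset.range n, q i (t i) :=
          Finset.sum_congr rfl (fun i hi => (hexact i (Finset.mem_range.mp hi)).symm)
      _ ≤ Q := htq
  · intro s hsgrid hswin hsprec hsQ
    -- construct the projection s' of s onto V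
    have hex : ∀ i, ∃ u : ℝ, i < n →
        ((i, u) ∈ V ∧ u ≤ s i ∧ ∀ v, (i, v) ∈ V → v ≤ s i → v ≤ u) := by
      intro i
      by_cases hi : i < n
      · obtain ⟨K, hK⟩ := hgridwin i hi
        obtain ⟨u, huW, hus, hmax⟩ := exists_max' hε (W := {u : ℝ | (i, u) ∈ V})
          (fun u hu => (hV (i, u) hu).2.2.2) (fun u hu => (hV (i, u) hu).2.2.1)
          ((hP1 i hi).1 : (i, e i) ∈ V) (hswin i hi).1 K hK
        exact ⟨u, fun _ => ⟨huW, hus, fun v hv hvs => hmax v hv hvs⟩⟩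
      · exact ⟨0, fun h => absurd h hi⟩
    choose s' hs' using hex
    -- consumption bound along s'
    have hqle : ∀ i, i < n → q i (s' i) ≤ ρ i (s i) := by
      intro i hi
      obtain ⟨hiV, hsle, hsmax⟩ := hs' i hi
      obtain ⟨-, heT, hTl, k₀, hk₀⟩ := hV _ hiV
      dsimp only at heT hTl hk₀
      obtain ⟨m, hm⟩ := hsgrid i hi
      obtain ⟨K, hKl⟩ := hgridwin i hi
      rcases eq_or_lt_of_le hTl with heq | hlt
      · have hse : s i = s' i := le_antisymm (by rw [heq]; exact (hswin i hi).2) hsle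
        rw [heq, hP3l i hi, hse, heq]
      · have hPex : ∃ j : ℕ, (i, e i + (j : ℝ) * ε) ∈ V ∧ s' i < e i + (j : ℝ) * ε :=
          ⟨K, by rw [← hKl]; exact ⟨(hP1 i hi).2, hlt⟩⟩
        obtain ⟨hj₁V, hj₁gt⟩ := Nat.find_spec hPex
        have hmin : ∀ u, (i, u) ∈ V → s' i < u → e i + (Nat.find hPex : ℝ) * ε ≤ u := by
          intro u huV hus
          obtain ⟨-, -, -, j, hj⟩ := hV _ huV
          dsimp only at hj
          have hj1 : Nat.find hPex ≤ j :=
            Nat.find_min' hPex ⟨by rw [← hj]; exact huV, by rw [← hj]; exact hus⟩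
          have hj2 : (Nat.find hPex : ℝ) ≤ (j : ℝ) := by exact_mod_cast hj1
          rw [hj]; nlinarith
        have hIs := hP3 i (s' i) hiV hlt _ hj₁V hj₁gt hmin
        have hk₀m : k₀ ≤ m := grid_le' hε (by rw [← hk₀, ← hm]; exact hsle)
        have hsilt : s i < e i + (Nat.find hPex : ℝ) * ε := by
          by_contra h
          push_neg at h
          have := hsmax _ hj₁V h
          exact absurd hj₁gt (not_lt.mpr this)
        refine hIs.2 ⟨m - k₀, ?_, ?_⟩
        · have hd : s' i + ((m - k₀ : ℕ) : ℝ) * ε = s i := by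
            rw [hk₀, hm, Nat.cast_sub hk₀m]; ring
          rw [hd]; exact hsilt
        · have hd : s' i + ((m - k₀ : ℕ) : ℝ) * ε = s i := by
            rw [hk₀, hm, Nat.cast_sub hk₀m]; ring
          rw [hd]
    -- precedence along s'
    have hprec' : ∀ i, i + 1 < n → θ i (s' i) ≤ s' (i + 1) := by
      intro i hi1
      have hi : i < n := by omega
      obtain ⟨hiV, hsle, hsmax⟩ := hs' i hi
      obtain ⟨hi1V, hsle1, hsmax1⟩ := hs' (i + 1) hi1
      set r : ℝ := ε * ⌈θ i (s' i) / ε⌉ with hr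
      have hθr : θ i (s' i) ≤ r := by
        have h1 : θ i (s' i) / ε ≤ (⌈θ i (s' i) / ε⌉ : ℝ) := Int.le_ceil _
        rw [hr, mul_comm]
        exact (div_le_iff₀ hε).mp h1
      have hrθ : r < θ i (s' i) + ε := by
        have h1 : (⌈θ i (s' i) / ε⌉ : ℝ) < θ i (s' i) / ε + 1 := Int.ceil_lt_add_one _
        have h2 : ε * (⌈θ i (s' i) / ε⌉ : ℝ) < ε * (θ i (s' i) / ε + 1) :=
          mul_lt_mul_of_pos_left h1 hε
        have h3 : ε * (θ i (s' i) / ε + 1) = θ i (s' i) + ε := by field_simp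
        rw [hr]; linarith
      have hθs : θ i (s' i) ≤ s (i + 1) := le_trans (hθmono i hsle) (hsprec i hi1)
      have he1 : e (i + 1) ≤ s' (i + 1) := (hV _ hi1V).2.1
      obtain ⟨m, hm⟩ := hsgrid (i + 1) hi1
      obtain ⟨K, hK⟩ := hgridwin (i + 1) hi1
      rcases le_or_gt r (e (i + 1)) with hre | her
      · linarith
      · rcases lt_or_ge r (l (i + 1)) with hrl | hlr
        · have hrV : (i + 1, r) ∈ V := hP2 i (s' i) hiV hi1 her hrl
          have hrs : r ≤ s (i + 1) := by
            obtain ⟨-, -, -, k, hk⟩ := hV _ hrV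
            dsimp only at hk
            by_contra h
            push_neg at h
            have hmk : m < k := grid_lt' hε (by rw [← hm, ← hk]; exact h)
            have hmk' : (m : ℝ) + 1 ≤ (k : ℝ) := by exact_mod_cast hmk
            have : s (i + 1) + ε ≤ r := by rw [hm, hk]; nlinarith
            linarith
          have := hsmax1 r hrV hrs
          linarith
        · have hml : m ≤ K := grid_le' hε (by rw [← hm, ← hK]; exact (hswin (i + 1) hi1).2)
          have hKm : K ≤ m := by
            by_contra h
            push_neg at h
            have hmk' : (m : ℝ) + 1 ≤ (K : ℝ) := by exact_mod_cast h
            have : s (i + 1) + ε ≤ l (i + 1) := by rw [hm, hK]; nlinarith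
            linarith
          have hmK : m = K := le_antisymm hml hKm
          have hsl : s (i + 1) = l (i + 1) := by rw [hm, hK, hmK]
          have := hsmax1 _ ((hP1 (i + 1) hi1).2) (le_of_eq hsl.symm)
          linarith
    have hQ' : ∑ i ∈ Finset.range n, q i (s' i) ≤ Q :=
      le_trans (Finset.sum_le_sum fun i hi => hqle i (Finset.mem_range.mp hi)) hsQ
    have h1 := htopt s' (fun i hi => (hs' i hi).1) hprec' hQ'
    have hn1 : n - 1 < n := by omega
    exact le_trans h1 (hθmono (n - 1) ((hs' (n - 1) hn1).2.1))
end

section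
/- The lexicographic selection key used in the TDASP label-setting algorithm is admissible: for any path (i,t_i),(i+1,t_{i+1}),…,(n,t_n) in the time-expanded network (i.e., with t_{j+1} ≥ θ_j(t_j) for all j), the completion time satisfies θ_n(t_n) ≥ θ_i(t_i) + Σ_{j=i+1}^{n} min_{t' ∈ [e_j,l_j]} τ_j(t'). Consequently the key value at a vertex never exceeds the completion time of any path through it, and vertices are made permanent in non-decreasing order of true attainable completion time. -/
/-- Admissibility of the lexicographic key: along any path in the
time-expanded network, the completion time of the last activity is at least
the key value θ_i(t_i) plus the sum of the minimal durations of the remaining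
activities. -/
theorem stmt_7 (n : ℕ) (τ θ : ℕ → ℝ → ℝ) (e l : ℕ → ℝ)
    (hθdef : ∀ j t, θ j t = t + τ j t)
    (hτ0 : ∀ j t, 0 ≤ τ j t)
    (hθmono : ∀ j, Monotone (θ j))
    (hel : ∀ j, e j ≤ l j)
    (i : ℕ) (hi : i < n)
    (t : ℕ → ℝ)
    (hwin : ∀ j, j < n → e j ≤ t j ∧ t j ≤ l j)
    (hprec : ∀ j, j + 1 < n → θ j (t j) ≤ t (j + 1)) :
    θ i (t i) + ∑ j ∈ Finset.Ioc i (n - 1), sInf (τ j '' Set.Icc (e j) (l j)) ≤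
      θ (n - 1) (t (n - 1)) := by
  have key : ∀ m, i ≤ m → m < n →
      θ i (t i) + ∑ j ∈ Finset.Ioc i m, sInf (τ j '' Set.Icc (e j) (l j)) ≤
        θ m (t m) := by
    intro m
    induction m with
    | zero =>
      intro him _
      interval_cases i
      simp
    | succ m ih =>
      intro him hmn
      rcases Nat.lt_or_ge i (m + 1) with h | h
      · have him' : i ≤ m := Nat.lt_succ_iff.mp h
        have hmn' : m < n := Nat.lt_of_succ_lt hmn
        rw [Finset.sum_Ioc_succ_top him']
        have hsInf : sInf (τ (m + 1) '' Set.Icc (e (m + 1)) (l (m + 1))) ≤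
            τ (m + 1) (t (m + 1)) := by
          apply csInf_le
          · exact ⟨0, fun x ⟨y, _, hy⟩ => hy ▸ hτ0 _ _⟩
          · exact ⟨t (m + 1), ⟨(hwin _ hmn).1, (hwin _ hmn).2⟩, rfl⟩
        have h1 := ih him' hmn'
        have h2 := hprec m hmn
        have : θ (m + 1) (t (m + 1)) = t (m + 1) + τ (m + 1) (t (m + 1)) :=
          hθdef _ _
        rw [← add_assoc]
        linarith
      · have : i = m + 1 := le_antisymm him h
        subst this
        simp
  exact key (n - 1) (Nat.le_sub_one_of_lt hi) (by omega)
end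

section
/- Rounding up to the grid preserves feasibility of edges in the partially expanded network: if θ_i is non-decreasing, t ≤ s, and (i+1, u) is any vertex with u ≥ ε⌈θ_i(s)/ε⌉, then u ≥ θ_i(t), so the edge (i,t) → (i+1,u) exists. Consequently, in any network satisfying Properties P1 and P2, rounding each time t_i of a discretized-feasible solution down to the nearest vertex time t'_i ≤ t_i of activity i yields times satisfying θ_i(t'_i) ≤ t'_{i+1} for all i < n. -/
/-- Rounding up to the grid preserves edge feasibility: under FIFO, any time
at least the rounded-up completion of a later start dominates the completion
of an earlier start; consequently, in a network with Properties P1 and P2,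
rounding a discretized feasible solution down to vertex times preserves the
precedence constraints. -/
theorem stmt_11 (n : ℕ) (ε : ℝ) (hε : 0 < ε)
    (θ : ℕ → ℝ → ℝ) (e l : ℕ → ℝ)
    (V : Set (ℕ × ℝ))
    (hθmono : ∀ i, Monotone (θ i))
    (hel : ∀ i, i < n → e i ≤ l i)
    (hwincomp : ∀ i, i + 1 < n → θ i (e i) ≤ e (i + 1) ∧ θ i (l i) ≤ l (i + 1))
    (hV : ∀ v ∈ V, v.1 < n ∧ e v.1 ≤ v.2 ∧ v.2 ≤ l v.1 ∧
      ∃ k : ℕ, v.2 = e v.1 + (k : ℝ) * ε)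
    (hP1 : ∀ i, i < n → (i, e i) ∈ V ∧ (i, l i) ∈ V)
    (hP2 : ∀ i t, (i, t) ∈ V → i + 1 < n →
      e (i + 1) < ε * ⌈θ i t / ε⌉ → ε * ⌈θ i t / ε⌉ < l (i + 1) →
      (i + 1, (ε * ⌈θ i t / ε⌉ : ℝ)) ∈ V)
    (t : ℕ → ℝ)
    (htgrid : ∀ i, i < n → ∃ k : ℕ, t i = e i + (k : ℝ) * ε)
    (htwin : ∀ i, i < n → e i ≤ t i ∧ t i ≤ l i)
    (htprec : ∀ i, i + 1 < n → θ i (t i) ≤ t (i + 1)) :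
    -- pointwise rounding fact
    (∀ (i : ℕ) (a s u : ℝ), a ≤ s → ε * ⌈θ i s / ε⌉ ≤ u → θ i a ≤ u) ∧
    -- consequence: rounded-down solution satisfies all precedence constraints
    (∃ t' : ℕ → ℝ,
      (∀ i, i < n → (i, t' i) ∈ V ∧ t' i ≤ t i ∧
        ∀ u, (i, u) ∈ V → u ≤ t i → u ≤ t' i) ∧
      ∀ i, i + 1 < n → θ i (t' i) ≤ t' (i + 1)) := by
  -- basic ceiling facts
  have hceil_ge : ∀ x : ℝ, x ≤ ε * ⌈x / ε⌉ := by
    intro x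
    have h := Int.le_ceil (x / ε)
    have := mul_le_mul_of_nonneg_left h hε.le
    calc x = ε * (x / ε) := by field_simp
      _ ≤ ε * ⌈x / ε⌉ := this
  have hceil_lt : ∀ x : ℝ, ε * ⌈x / ε⌉ < x + ε := by
    intro x
    have h := Int.ceil_lt_add_one (x / ε)
    have := mul_lt_mul_of_pos_left h hε
    have hx : ε * (x / ε) = x := by field_simp
    rw [mul_add, mul_one, hx] at this
    linarith
  -- step lemma on the grid
  have hstep : ∀ (a : ℝ) (k k' : ℕ), a + (k : ℝ) * ε < a + (k' : ℝ) * ε →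
      a + (k : ℝ) * ε + ε ≤ a + (k' : ℝ) * ε := by
    intro a k k' h
    have hk : (k : ℝ) * ε < (k' : ℝ) * ε := by linarith
    have : (k : ℝ) < k' := lt_of_mul_lt_mul_right hk hε.le
    have hkk : k < k' := by exact_mod_cast this
    have : ((k : ℝ) + 1) ≤ (k' : ℝ) := by exact_mod_cast hkk
    nlinarith
  refine ⟨?_, ?_⟩
  · intro i a s u has hu
    have h1 : θ i a ≤ θ i s := hθmono i has
    have h2 := hceil_ge (θ i s)
    linarith
  · classical
    set K : ℕ → Set ℕ := fun i => {k | (i, e i + (k : ℝ) * ε) ∈ V ∧ e i + (k : ℝ) * ε ≤ t i}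
      with hKdef
    have hKne : ∀ i, i < n → (K i).Nonempty := by
      intro i hi
      refine ⟨0, ?_, ?_⟩
      · simpa using (hP1 i hi).1
      · simpa using (htwin i hi).1
    have hKbdd : ∀ i, BddAbove (K i) := by
      intro i
      refine ⟨⌈(t i - e i) / ε⌉₊, fun k hk => ?_⟩
      have h1 : e i + (k : ℝ) * ε ≤ t i := hk.2
      have h2 : (k : ℝ) ≤ (t i - e i) / ε := by
        rw [le_div_iff₀ hε]; linarith
      have h3 : (k : ℝ) ≤ (⌈(t i - e i) / ε⌉₊ : ℝ) := le_trans h2 (Nat.le_ceil _)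
      exact_mod_cast h3
    set t' : ℕ → ℝ := fun i => if i < n then e i + ((sSup (K i) : ℕ) : ℝ) * ε else t i with ht'def
    have ht'mem : ∀ i, i < n → sSup (K i) ∈ K i := fun i hi =>
      Nat.sSup_mem (hKne i hi) (hKbdd i)
    have ht'eq : ∀ i, i < n → t' i = e i + ((sSup (K i) : ℕ) : ℝ) * ε := by
      intro i hi; simp [ht'def, hi]
    have hmemV : ∀ i, i < n → (i, t' i) ∈ V := by
      intro i hi; rw [ht'eq i hi]; exact (ht'mem i hi).1
    have hlet : ∀ i, i < n → t' i ≤ t i := by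
      intro i hi; rw [ht'eq i hi]; exact (ht'mem i hi).2
    have hmax : ∀ i, i < n → ∀ u, (i, u) ∈ V → u ≤ t i → u ≤ t' i := by
      intro i hi u huV hut
      obtain ⟨k, hk⟩ := (hV _ huV).2.2.2
      simp only at hk
      have hkK : k ∈ K i := by
        constructor
        · rw [← hk]; exact huV
        · rw [← hk]; exact hut
      have hle : k ≤ sSup (K i) := le_csSup (hKbdd i) hkK
      have : (k : ℝ) ≤ ((sSup (K i) : ℕ) : ℝ) := by exact_mod_cast hle
      rw [ht'eq i hi, hk]
      nlinarith
    refine ⟨t', fun i hi => ⟨hmemV i hi, hlet i hi, hmax i hi⟩, ?_⟩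
    intro i hi
    have hi' : i < n := Nat.lt_of_succ_lt hi
    have hi1 : i + 1 < n := hi
    -- θ' ≤ t (i+1)
    have hθt : θ i (t' i) ≤ t (i + 1) :=
      le_trans (hθmono i (hlet i hi')) (htprec i hi)
    set θ' := θ i (t' i) with hθ'
    set r := ε * (⌈θ' / ε⌉ : ℝ) with hr
    have hθr : θ' ≤ r := hceil_ge θ'
    have hrθ : r < θ' + ε := hceil_lt θ'
    obtain ⟨k, hk⟩ := htgrid (i + 1) hi1
    -- find a vertex u in row i+1 with θ' ≤ u ≤ t (i+1)
    have key : ∃ u, (i + 1, u) ∈ V ∧ θ' ≤ u ∧ u ≤ t (i + 1) := by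
      rcases le_or_gt r (e (i + 1)) with hre | hre
      · exact ⟨e (i + 1), (hP1 _ hi1).1, le_trans hθr hre, (htwin _ hi1).1⟩
      rcases lt_or_ge r (l (i + 1)) with hrl | hrl
      · -- P2 vertex
        have hmem : (i + 1, r) ∈ V := hP2 i (t' i) (hmemV i hi') hi1 hre hrl
        obtain ⟨k', hk'⟩ := (hV _ hmem).2.2.2
        simp only at hk'
        refine ⟨r, hmem, hθr, ?_⟩
        by_contra hlt
        push_neg at hlt
        have := hstep (e (i + 1)) k k' (by rw [← hk, ← hk']; exact hlt)
        rw [← hk, ← hk'] at this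
        linarith
      · -- r ≥ l (i+1) : then l (i+1) = t (i+1)
        have hlV : (i + 1, l (i + 1)) ∈ V := (hP1 _ hi1).2
        obtain ⟨k', hk'⟩ := (hV _ hlV).2.2.2
        simp only at hk'
        have htl : t (i + 1) ≤ l (i + 1) := (htwin _ hi1).2
        refine ⟨l (i + 1), hlV, ?_, ?_⟩
        · linarith
        · by_contra hlt
          push_neg at hlt
          have := hstep (e (i + 1)) k k' (by rw [← hk, ← hk']; exact hlt)
          rw [← hk, ← hk'] at this
          linarith
    obtain ⟨u, huV, hθu, hut⟩ := key
    exact le_trans hθu (hmax (i + 1) hi1 u huV hut)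
end

section
/- Termination and correctness of dynamic discretization discovery: the DDD algorithm, which repeatedly solves the TDASP restricted to the current partially expanded network and, whenever the restricted solution uses a vertex (i,t_i) with ρ_i(t_i) > q_{(i,t_i)}, inserts at least one new grid vertex for activity i strictly increasing q_{(i,t_i)}, terminates after at most |full grid| iterations; upon termination either it reports infeasibility (the restricted problem is infeasible, which implies the fully discretized problem is infeasible) or it returns a solution with q_{(i,t_i)} = ρ_i(t_i) for all i, which is optimal for the fully discretized TDASP. -/
/-- Termination and correctness of dynamic discretization discovery: since the
partially expanded network grows strictly in every non-terminal iteration and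
is contained in the finite full grid, the algorithm terminates within
`Full.card` iterations; at termination, restricted infeasibility implies full
infeasibility, and a restricted optimum with exact q-values is a full optimum. -/
theorem stmt_13 (n : ℕ) (hn : 1 ≤ n) (ε : ℝ) (hε : 0 < ε)
    (θ ρ : ℕ → ℝ → ℝ) (e l : ℕ → ℝ) (Q : ℝ)
    (hθmono : ∀ i, Monotone (θ i))
    (Full : Finset (ℕ × ℝ))
    (hFull : ∀ v, v ∈ Full ↔ v.1 < n ∧ e v.1 ≤ v.2 ∧ v.2 ≤ l v.1 ∧
      ∃ k : ℕ, v.2 = e v.1 + (k : ℝ) * ε)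
    -- the sequence of partially expanded networks with their q-values
    (V : ℕ → Finset (ℕ × ℝ)) (qf : ℕ → ℕ → ℝ → ℝ)
    (hsub : ∀ m, V m ⊆ Full)
    -- the DDD stopping condition
    (done : ℕ → Prop)
    (hdone : ∀ m, done m ↔
      ((¬ ∃ p : ℕ → ℝ, (∀ i, i < n → (i, p i) ∈ V m) ∧
          (∀ i, i + 1 < n → θ i (p i) ≤ p (i + 1)) ∧
          ∑ i ∈ Finset.range n, qf m i (p i) ≤ Q) ∨
        (∃ p : ℕ → ℝ, (∀ i, i < n → (i, p i) ∈ V m) ∧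
          (∀ i, i + 1 < n → θ i (p i) ≤ p (i + 1)) ∧
          (∑ i ∈ Finset.range n, qf m i (p i) ≤ Q) ∧
          (∀ p' : ℕ → ℝ, (∀ i, i < n → (i, p' i) ∈ V m) →
            (∀ i, i + 1 < n → θ i (p' i) ≤ p' (i + 1)) →
            (∑ i ∈ Finset.range n, qf m i (p' i) ≤ Q) →
            θ (n - 1) (p (n - 1)) ≤ θ (n - 1) (p' (n - 1))) ∧
          (∀ i, i < n → qf m i (p i) = ρ i (p i)))))
    -- in every non-terminal iteration at least one vertex is inserted
    (hgrow : ∀ m, ¬ done m → V m ⊂ V (m + 1))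
    -- lower-bound invariant (Properties P1–P3 are maintained): every fully
    -- feasible solution has a rounded-down feasible image in each network
    (hinv : ∀ m, ∀ t : ℕ → ℝ,
      (∀ i, i < n → (i, t i) ∈ Full) →
      (∀ i, i + 1 < n → θ i (t i) ≤ t (i + 1)) →
      (∑ i ∈ Finset.range n, ρ i (t i) ≤ Q) →
      ∃ t' : ℕ → ℝ, (∀ i, i < n → (i, t' i) ∈ V m) ∧
        (∀ i, i + 1 < n → θ i (t' i) ≤ t' (i + 1)) ∧
        (∑ i ∈ Finset.range n, qf m i (t' i) ≤ Q) ∧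
        θ (n - 1) (t' (n - 1)) ≤ θ (n - 1) (t (n - 1))) :
    ∃ m, m ≤ Full.card ∧ done m ∧
      -- restricted infeasibility at termination implies full infeasibility
      ((¬ ∃ p : ℕ → ℝ, (∀ i, i < n → (i, p i) ∈ V m) ∧
          (∀ i, i + 1 < n → θ i (p i) ≤ p (i + 1)) ∧
          ∑ i ∈ Finset.range n, qf m i (p i) ≤ Q) →
        ¬ ∃ t : ℕ → ℝ, (∀ i, i < n → (i, t i) ∈ Full) ∧
          (∀ i, i + 1 < n → θ i (t i) ≤ t (i + 1)) ∧
          ∑ i ∈ Finset.range n, ρ i (t i) ≤ Q) ∧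
      -- a restricted optimum with exact q-values is feasible and optimal
      -- for the fully discretized problem
      (∀ p : ℕ → ℝ,
        (∀ i, i < n → (i, p i) ∈ V m) →
        (∀ i, i + 1 < n → θ i (p i) ≤ p (i + 1)) →
        (∑ i ∈ Finset.range n, qf m i (p i) ≤ Q) →
        (∀ p' : ℕ → ℝ, (∀ i, i < n → (i, p' i) ∈ V m) →
          (∀ i, i + 1 < n → θ i (p' i) ≤ p' (i + 1)) →
          (∑ i ∈ Finset.range n, qf m i (p' i) ≤ Q) →
          θ (n - 1) (p (n - 1)) ≤ θ (n - 1) (p' (n - 1))) →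
        (∀ i, i < n → qf m i (p i) = ρ i (p i)) →
        (∑ i ∈ Finset.range n, ρ i (p i) ≤ Q) ∧
        (∀ t : ℕ → ℝ, (∀ i, i < n → (i, t i) ∈ Full) →
          (∀ i, i + 1 < n → θ i (t i) ≤ t (i + 1)) →
          (∑ i ∈ Finset.range n, ρ i (t i) ≤ Q) →
          θ (n - 1) (p (n - 1)) ≤ θ (n - 1) (t (n - 1)))) := by
  -- termination: find m ≤ Full.card with done m
  have hterm : ∃ m, m ≤ Full.card ∧ done m := by
    by_contra h
    push_neg at h
    have key : ∀ k, k ≤ Full.card + 1 → k ≤ (V k).card := by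
      intro k
      induction k with
      | zero => intro _; exact Nat.zero_le _
      | succ k ih =>
        intro hk
        have hk' : k ≤ Full.card := Nat.lt_succ_iff.mp hk
        have hnd : ¬ done k := h k hk'
        have := Finset.card_lt_card (hgrow k hnd)
        have := ih (le_trans hk' (Nat.le_succ _))
        omega
    have h1 := key (Full.card + 1) le_rfl
    have h2 := Finset.card_le_card (hsub (Full.card + 1))
    omega
  obtain ⟨m, hm, hdm⟩ := hterm
  refine ⟨m, hm, hdm, ?_, ?_⟩
  · intro hinfeas ⟨t, ht1, ht2, ht3⟩
    obtain ⟨t', h1, h2, h3, _⟩ := hinv m t ht1 ht2 ht3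
    exact hinfeas ⟨t', h1, h2, h3⟩
  · intro p hp1 hp2 hp3 hopt hexact
    have hsum : ∑ i ∈ Finset.range n, ρ i (p i) ≤ Q := by
      have : ∑ i ∈ Finset.range n, ρ i (p i) = ∑ i ∈ Finset.range n, qf m i (p i) := by
        apply Finset.sum_congr rfl
        intro i hi
        exact (hexact i (Finset.mem_range.mp hi)).symm
      rw [this]; exact hp3
    refine ⟨hsum, ?_⟩
    intro t ht1 ht2 ht3
    obtain ⟨t', h1, h2, h3, h4⟩ := hinv m t ht1 ht2 ht3
    exact le_trans (hopt t' h1 h2 h3) h4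
end
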